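/- Define κ(z,w) := √π e^{z²+w²} ∫_{−∞}^{0} [f_w(u) f_z'(u) − f_z(u) f_w'(u)] du where f_z(u) := (1/2) erfc(√2(z−u)). Then κ(z,w) = e^{2zw} ∫_{−∞}^{0} e^{−t²} sinh(2t(w−z)) erfc(z+w−t) dt for all complex z, w. -/

import Mathlib

/-- The complementary error function extended to complex arguments. -/
noncomputable def cerfc (z : ℂ) : ℂ :=
  1 - (2 / (Real.sqrt Real.pi : ℂ)) * ∫ t in (0:ℝ)..1, z * Complex.exp (-((t : ℂ) * z) ^ 2)

/-- `f_z(u) = (1/2) erfc(√2 (z - u))`, for real `u`. -/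
noncomputable def fz (z : ℂ) (u : ℝ) : ℂ := (1 / 2) * cerfc ((Real.sqrt 2 : ℂ) * (z - (u : ℂ)))

/-- The edge pre-kernel `κ(z,w) = √π e^{z²+w²} ∫_{-∞}^0 W(f_w, f_z)(u) du`, where
`W(f,g)(u) = f(u) g'(u) - f'(u) g(u)` is the Wronskian in `u`. -/
noncomputable def kappaEdge (z w : ℂ) : ℂ :=
  (Real.sqrt Real.pi : ℂ) * Complex.exp (z ^ 2 + w ^ 2) *
    ∫ u in Set.Iio (0:ℝ), (fz w u * deriv (fz z) u - fz z u * deriv (fz w) u)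

/-!
For complex `a` one has `erfc a = (2/√π) ∫_{s>0} e^{-(a+s)²} ds`: both sides are entire in `a`,
have derivative `-(2/√π) e^{-a²}`, and agree at `a = 0`. Inserting this into `f_z` and using
`2a² + 2b² = (a+b)² + (a-b)²`, the Wronskian becomes
`W(f_w, f_z)(u) = (2/π) ∫_{s>0} (e^{-(w-z+s)²} - e^{-(z-w+s)²}) e^{-(z+w+s-2u)²} ds`.
After exchanging the integrals, the `u`-integral is again an `erfc`, and the substitution `s = -t`
with `z² + w² - (w-z∓t)² = 2zw - t² ± 2t(w-z)` produces the `sinh`.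
-/

open MeasureTheory Set Filter Complex Topology

lemma norm_cexp_neg_sq_add_ofReal_le (A : ℂ) (r : ℝ) :
    ‖cexp (-(A + r) ^ 2)‖ ≤ Real.exp (‖A‖ ^ 2) * Real.exp (-(1 / 2) * r ^ 2) := by
  rw [Complex.norm_exp, ← Real.exp_add, Complex.sq_norm, Complex.normSq_apply]
  gcongr
  simp only [neg_re, sq, add_re, add_im, ofReal_re, ofReal_im, mul_re]
  nlinarith [sq_nonneg (A.re + r / 2)]

lemma norm_cexp_neg_sq_add_ofReal_le_exp (A : ℂ) (r : ℝ) :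
    ‖cexp (-(A + r) ^ 2)‖ ≤ Real.exp (‖A‖ ^ 2) :=
  (norm_cexp_neg_sq_add_ofReal_le A r).trans <| mul_le_of_le_one_right (Real.exp_nonneg _) <|
    Real.exp_le_one_iff.2 (by nlinarith [sq_nonneg r])

lemma integrable_cexp_neg_sq_add_ofReal (A : ℂ) : Integrable fun r : ℝ ↦ cexp (-(A + r) ^ 2) :=
  ((integrable_exp_neg_mul_sq (by norm_num : (0 : ℝ) < 1 / 2)).const_mul _).mono'
    (by fun_prop) (.of_forall (norm_cexp_neg_sq_add_ofReal_le A))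

lemma tendsto_cexp_neg_sq_add_ofReal_atTop (A : ℂ) :
    Tendsto (fun r : ℝ ↦ cexp (-(A + r) ^ 2)) atTop (𝓝 0) := by
  refine squeeze_zero_norm (norm_cexp_neg_sq_add_ofReal_le A) ?_
  have : Tendsto (fun r : ℝ ↦ Real.exp (-(1 / 2) * r ^ 2)) atTop (𝓝 0) :=
    Real.tendsto_exp_atBot.comp
      ((tendsto_pow_atTop two_ne_zero).const_mul_atTop_of_neg (by norm_num))
  simpa using this.const_mul (Real.exp (‖A‖ ^ 2))

lemma hasDerivAt_cexp_neg_sq (z : ℂ) :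
    HasDerivAt (fun z ↦ cexp (-z ^ 2)) (-2 * z * cexp (-z ^ 2)) z := by
  simpa [mul_comm, mul_assoc] using ((hasDerivAt_pow 2 z).neg).cexp

lemma cerfc_eq_of_hasDerivAt {G : ℂ → ℂ} (hG : ∀ z, HasDerivAt G (cexp (-z ^ 2)) z) (z : ℂ) :
    cerfc z = 1 - 2 / (Real.sqrt Real.pi : ℂ) * (G z - G 0) := by
  have hline (t : ℝ) : HasDerivAt (fun t : ℝ ↦ G (t * z)) (z * cexp (-(t * z) ^ 2)) t := by
    simpa [mul_comm] using ((hG (t * z)).comp (t : ℂ) (hasDerivAt_mul_const z)).comp_ofReal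
  rw [cerfc, intervalIntegral.integral_eq_sub_of_hasDerivAt (fun t _ ↦ hline t)
    (Continuous.intervalIntegrable (by fun_prop) _ _)]
  simp

lemma hasDerivAt_cerfc (z : ℂ) :
    HasDerivAt cerfc (-(2 / (Real.sqrt Real.pi : ℂ)) * cexp (-z ^ 2)) z := by
  obtain ⟨G, hG⟩ := (show Differentiable ℂ fun z : ℂ ↦ cexp (-z ^ 2) by fun_prop).isExactOn_univ
  have hG' (z : ℂ) : HasDerivAt G (cexp (-z ^ 2)) z := hG z (mem_univ z)
  rw [funext (cerfc_eq_of_hasDerivAt hG')]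
  exact ((((hG' z).sub_const (G 0)).const_mul _).const_sub 1).congr_deriv (by ring)

lemma hasDerivAt_integral_Ioi_cexp_neg_sq_add (a₀ : ℂ) :
    HasDerivAt (fun a : ℂ ↦ ∫ s in Ioi (0 : ℝ), cexp (-(a + s) ^ 2)) (-cexp (-a₀ ^ 2)) a₀ := by
  set R := ‖a₀‖ + 1
  set g : ℝ → ℝ := fun s ↦ Real.exp (-(1 / 2) * s ^ 2)
  have hderiv (a : ℂ) (s : ℝ) :
      HasDerivAt (fun a ↦ cexp (-(a + s) ^ 2)) (-2 * (a + s) * cexp (-(a + s) ^ 2)) a :=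
    (hasDerivAt_cexp_neg_sq _).comp_add_const _ _
  have hbound (s : ℝ) (a : ℂ) (ha : a ∈ Metric.ball a₀ 1) :
      ‖-2 * (a + s) * cexp (-(a + s) ^ 2)‖ ≤ 2 * Real.exp (R ^ 2) * (R * g s + ‖s * g s‖) := by
    have haR : ‖a‖ ≤ R := by
      have := norm_le_norm_add_norm_sub' a a₀
      rw [Metric.mem_ball, dist_eq_norm] at ha
      linarith
    have hsum : ‖a + s‖ ≤ R + |s| := (norm_add_le _ _).trans (by simpa using haR)
    rw [norm_mul, norm_mul, norm_neg, Complex.norm_two, Real.norm_eq_abs, abs_mul, Real.abs_exp]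
    calc 2 * ‖a + s‖ * ‖cexp (-(a + s) ^ 2)‖
        ≤ 2 * (R + |s|) * (Real.exp (R ^ 2) * g s) := by
          gcongr
          exact (norm_cexp_neg_sq_add_ofReal_le a s).trans (by gcongr)
      _ = 2 * Real.exp (R ^ 2) * (R * g s + |s| * g s) := by ring
  have hg : Integrable g := integrable_exp_neg_mul_sq (by norm_num)
  have hbound_int : Integrable fun s ↦ 2 * Real.exp (R ^ 2) * (R * g s + ‖s * g s‖) :=
    ((hg.const_mul R).add (integrable_mul_exp_neg_mul_sq (by norm_num)).norm).const_mul _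
  obtain ⟨hF'_int, hF⟩ := hasDerivAt_integral_of_dominated_loc_of_deriv_le
    (μ := volume.restrict (Ioi 0)) (Metric.ball_mem_nhds a₀ one_pos)
    (.of_forall fun a ↦ (Continuous.aestronglyMeasurable (by fun_prop)))
    (integrable_cexp_neg_sq_add_ofReal a₀).restrict
    (Continuous.aestronglyMeasurable (by fun_prop))
    (.of_forall hbound) hbound_int.restrict (.of_forall fun s a _ ↦ hderiv a s)
  have hderiv_s (s : ℝ) : HasDerivAt (fun s : ℝ ↦ cexp (-(a₀ + s) ^ 2))
      (-2 * (a₀ + s) * cexp (-(a₀ + s) ^ 2)) s :=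
    ((hasDerivAt_cexp_neg_sq _).comp_const_add a₀ (s : ℂ)).comp_ofReal
  rw [integral_Ioi_of_hasDerivAt_of_tendsto' (fun s _ ↦ hderiv_s s) hF'_int
    (tendsto_cexp_neg_sq_add_ofReal_atTop a₀)] at hF
  simpa using hF

lemma ofReal_sqrt_two_ne_zero : (Real.sqrt 2 : ℂ) ≠ 0 := by
  exact_mod_cast (Real.sqrt_pos.2 two_pos).ne'

lemma ofReal_sqrt_pi_ne_zero : (Real.sqrt Real.pi : ℂ) ≠ 0 := by
  exact_mod_cast (Real.sqrt_pos.2 Real.pi_pos).ne'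

lemma ofReal_sqrt_two_sq : (Real.sqrt 2 : ℂ) ^ 2 = 2 := by
  rw [← ofReal_pow, Real.sq_sqrt zero_le_two, ofReal_ofNat]

lemma ofReal_sqrt_pi_sq : (Real.sqrt Real.pi : ℂ) ^ 2 = Real.pi := by
  rw [← ofReal_pow, Real.sq_sqrt Real.pi_pos.le]

lemma integral_Ioi_cexp_neg_sq_add (a : ℂ) :
    ∫ s in Ioi (0 : ℝ), cexp (-(a + s) ^ 2) = (Real.sqrt Real.pi : ℂ) / 2 * cerfc a := by
  set H : ℂ → ℂ := fun a ↦
    (∫ s in Ioi (0 : ℝ), cexp (-(a + s) ^ 2)) - (Real.sqrt Real.pi : ℂ) / 2 * cerfc a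
  have hH (a : ℂ) : HasDerivAt H 0 a := by
    refine ((hasDerivAt_integral_Ioi_cexp_neg_sq_add a).sub
      ((hasDerivAt_cerfc a).const_mul _)).congr_deriv ?_
    field_simp [ofReal_sqrt_pi_ne_zero]
    ring
  have hH0 : H 0 = 0 := by
    have hgauss : ∫ s in Ioi (0 : ℝ), cexp (-(s : ℂ) ^ 2) = (Real.sqrt Real.pi : ℂ) / 2 := by
      have := integral_gaussian_Ioi 1
      simp only [neg_one_mul, div_one] at this
      calc ∫ s in Ioi (0 : ℝ), cexp (-(s : ℂ) ^ 2)
          = ∫ s in Ioi (0 : ℝ), ((Real.exp (-s ^ 2) : ℝ) : ℂ) := by simp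
        _ = (Real.sqrt Real.pi : ℂ) / 2 := by rw [integral_complex_ofReal, this]; push_cast; rfl
    simp [H, hgauss, cerfc]
  have := is_const_of_deriv_eq_zero (fun a ↦ (hH a).differentiableAt) (fun a ↦ (hH a).deriv) a 0
  rwa [hH0, sub_eq_zero] at this

lemma integral_Ioi_cexp_neg_sq_add_mul (a : ℂ) {c : ℝ} (hc : 0 < c) :
    ∫ s in Ioi (0 : ℝ), cexp (-(a + c * s) ^ 2) = (Real.sqrt Real.pi : ℂ) / (2 * c) * cerfc a := by
  have := integral_comp_mul_left_Ioi (fun x : ℝ ↦ cexp (-(a + x) ^ 2)) 0 hc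
  simp only [ofReal_mul, mul_zero, integral_Ioi_cexp_neg_sq_add] at this
  rw [this, real_smul, ofReal_inv]
  field_simp

lemma integrable_cexp_neg_sq_add_mul (a : ℂ) {c : ℝ} (hc : c ≠ 0) :
    Integrable fun s : ℝ ↦ cexp (-(a + c * s) ^ 2) := by
  simpa using (integrable_cexp_neg_sq_add_ofReal a).comp_mul_left' hc

lemma fz_eq_integral (z : ℂ) (u : ℝ) :
    fz z u = (Real.sqrt 2 : ℂ) / Real.sqrt Real.pi *
      ∫ s in Ioi (0 : ℝ), cexp (-((Real.sqrt 2 : ℂ) * (z - u) + (Real.sqrt 2 : ℝ) * s) ^ 2) := by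
  rw [integral_Ioi_cexp_neg_sq_add_mul _ (by positivity), fz]
  field_simp [ofReal_sqrt_two_ne_zero, ofReal_sqrt_pi_ne_zero]

lemma hasDerivAt_fz (z : ℂ) (u : ℝ) :
    HasDerivAt (fz z)
      ((Real.sqrt 2 : ℂ) / Real.sqrt Real.pi * cexp (-((Real.sqrt 2 : ℂ) * (z - u)) ^ 2)) u := by
  have hinner : HasDerivAt (fun v : ℂ ↦ (Real.sqrt 2 : ℂ) * (z - v)) (-(Real.sqrt 2 : ℂ)) u := by
    simpa using ((hasDerivAt_id (u : ℂ)).const_sub z).const_mul (Real.sqrt 2 : ℂ)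
  refine (((hasDerivAt_cerfc _).comp (u : ℂ) hinner).const_mul (1 / 2 : ℂ)).comp_ofReal.congr_deriv ?_
  field_simp [ofReal_sqrt_pi_ne_zero]

lemma wronskian_fz_eq_integral (z w : ℂ) (u : ℝ) :
    fz w u * deriv (fz z) u - fz z u * deriv (fz w) u
      = 2 / Real.pi * ∫ s in Ioi (0 : ℝ),
          (cexp (-(w - z + s) ^ 2) - cexp (-(z - w + s) ^ 2)) * cexp (-(z + w + s - 2 * u) ^ 2) := by
  set c : ℂ := (Real.sqrt 2 : ℂ) / Real.sqrt Real.pi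
  have hc : c ^ 2 = 2 / Real.pi := by rw [div_pow, ofReal_sqrt_two_sq, ofReal_sqrt_pi_sq]
  have hint (a : ℂ) := integrable_cexp_neg_sq_add_mul a (c := Real.sqrt 2) (by positivity)
  rw [(hasDerivAt_fz z u).deriv, (hasDerivAt_fz w u).deriv, fz_eq_integral w u, fz_eq_integral z u,
    ← hc, show ∀ I J P Q : ℂ, c * I * (c * P) - c * J * (c * Q) = c ^ 2 * (I * P - J * Q) by
      intros; ring, ← integral_mul_const, ← integral_mul_const,
    ← integral_sub ((hint _).integrableOn.mul_const _) ((hint _).integrableOn.mul_const _)]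
  congr 1
  refine setIntegral_congr_fun measurableSet_Ioi fun s _ ↦ ?_
  simp only [sub_mul, ← Complex.exp_add]
  congr 2
  · linear_combination (-((w - u + s) ^ 2 + (z - u) ^ 2)) * ofReal_sqrt_two_sq
  · linear_combination (-((z - u + s) ^ 2 + (w - u) ^ 2)) * ofReal_sqrt_two_sq

lemma integral_Ioi_zero_eq_integral_Iio_comp_neg {E : Type*} [NormedAddCommGroup E]
    [NormedSpace ℝ E] (f : ℝ → E) : ∫ s in Ioi (0 : ℝ), f s = ∫ t in Iio (0 : ℝ), f (-t) := by
  rw [← integral_Iic_eq_integral_Iio, integral_comp_neg_Iic, neg_zero]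

lemma integral_Iio_cexp_neg_sq_sub_two_mul (a : ℂ) :
    ∫ u in Iio (0 : ℝ), cexp (-(a - 2 * u) ^ 2) = (Real.sqrt Real.pi : ℂ) / 4 * cerfc a := by
  have := integral_Ioi_cexp_neg_sq_add_mul a two_pos
  rw [integral_Ioi_zero_eq_integral_Iio_comp_neg] at this
  simp only [ofReal_neg, ofReal_ofNat, mul_neg, ← sub_eq_add_neg] at this
  rw [this]
  ring

lemma integrable_cexp_neg_sq_add_sub_two_mul (a : ℂ) :
    Integrable (fun p : ℝ × ℝ ↦ cexp (-(a + p.2 - 2 * p.1) ^ 2))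
      ((volume.restrict (Iio 0)).prod (volume.restrict (Ioi 0))) := by
  set g : ℝ → ℝ := fun r ↦ Real.exp (-(1 / 2) * r ^ 2)
  have hg : Integrable g := integrable_exp_neg_mul_sq (by norm_num)
  refine ((hg.restrict.mul_prod hg.restrict).const_mul (Real.exp (‖a‖ ^ 2))).mono'
    (Continuous.aestronglyMeasurable (by fun_prop)) ?_
  rw [Measure.prod_restrict, ae_restrict_iff' (measurableSet_Iio.prod measurableSet_Ioi)]
  refine .of_forall fun ⟨u, s⟩ ⟨(hu : u < 0), (hs : 0 < s)⟩ ↦ ?_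
  calc ‖cexp (-(a + s - 2 * u) ^ 2)‖ = ‖cexp (-(a + ((s - 2 * u : ℝ) : ℂ)) ^ 2)‖ := by
        push_cast; ring_nf
    _ ≤ Real.exp (‖a‖ ^ 2) * g (s - 2 * u) := norm_cexp_neg_sq_add_ofReal_le a _
    _ ≤ Real.exp (‖a‖ ^ 2) * (g u * g s) := by
        simp only [g, ← Real.exp_add]
        gcongr
        nlinarith [mul_pos hs (neg_pos.2 hu)]

lemma cexp_sq_add_sq_mul_sub_cexp (z w t : ℂ) :
    cexp (z ^ 2 + w ^ 2) * (cexp (-(w - z - t) ^ 2) - cexp (-(z - w - t) ^ 2))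
      = 2 * cexp (2 * z * w) * (cexp (-t ^ 2) * Complex.sinh (2 * t * (w - z))) := by
  have hplus : cexp (z ^ 2 + w ^ 2) * cexp (-(w - z - t) ^ 2)
      = cexp (2 * z * w) * (cexp (-t ^ 2) * cexp (2 * t * (w - z))) := by
    simp only [← Complex.exp_add]; ring_nf
  have hminus : cexp (z ^ 2 + w ^ 2) * cexp (-(z - w - t) ^ 2)
      = cexp (2 * z * w) * (cexp (-t ^ 2) * cexp (-(2 * t * (w - z)))) := by
    simp only [← Complex.exp_add]; ring_nf
  rw [Complex.sinh, mul_sub, hplus, hminus]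
  ring

theorem stmt9 (z w : ℂ) :
    kappaEdge z w = Complex.exp (2 * z * w) *
      ∫ t in Set.Iio (0:ℝ),
        Complex.exp (-(t : ℂ) ^ 2) * Complex.sinh (2 * (t : ℂ) * (w - z)) *
          cerfc (z + w - (t : ℂ)) := by
  set D : ℝ → ℂ := fun s ↦ cexp (-(w - z + s) ^ 2) - cexp (-(z - w + s) ^ 2)
  have hD (s : ℝ) : ‖D s‖ ≤ Real.exp (‖w - z‖ ^ 2) + Real.exp (‖z - w‖ ^ 2) :=
    (norm_sub_le _ _).trans (add_le_add (norm_cexp_neg_sq_add_ofReal_le_exp _ _)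
      (norm_cexp_neg_sq_add_ofReal_le_exp _ _))
  have hfubini := integral_integral_swap (f := fun u s : ℝ ↦ D s * cexp (-(z + w + s - 2 * u) ^ 2))
    ((integrable_cexp_neg_sq_add_sub_two_mul (z + w)).bdd_mul
      (Continuous.aestronglyMeasurable (by fun_prop)) (.of_forall fun p ↦ hD p.2))
  rw [kappaEdge, setIntegral_congr_fun measurableSet_Iio fun u _ ↦ wronskian_fz_eq_integral z w u,
    integral_const_mul, hfubini]
  simp_rw [integral_const_mul, integral_Iio_cexp_neg_sq_sub_two_mul, mul_left_comm (D _),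
    integral_const_mul, integral_Ioi_zero_eq_integral_Iio_comp_neg, ← integral_const_mul]
  refine setIntegral_congr_fun measurableSet_Iio fun t _ ↦ ?_
  have hpoint := cexp_sq_add_sq_mul_sub_cexp z w t
  simp only [D, ofReal_neg, ← sub_eq_add_neg]
  have hconst : (Real.sqrt Real.pi : ℂ) * (2 / Real.pi) * (Real.sqrt Real.pi / 4) = 1 / 2 := by
    have hpi : (Real.pi : ℂ) ≠ 0 := by exact_mod_cast Real.pi_ne_zero
    field_simp
    linear_combination 4 * ofReal_sqrt_pi_sq
  linear_combination (1 / 2 * cerfc (z + w - t)) * hpoint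
    + (cexp (z ^ 2 + w ^ 2) * (cexp (-(w - z - t) ^ 2) - cexp (-(z - w - t) ^ 2))
      * cerfc (z + w - t)) * hconst
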